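/- arXiv:1202.1061 — 5 statements merged into one kernel-verified Lean document; each statement's English description precedes it below -/
import Mathlib

section
/- Any shadow of genus g over one backbone contains at least 2g arcs and at most 6g − 2 arcs. -/
lemma val_finRotate {m : ℕ} (hm : 0 < m) (x : Fin m) :
    ((finRotate m) x).val = (x.val + 1) % m := by
  cases m with
  | zero => omega
  | succ k =>
    rw [finRotate_succ_apply, Fin.val_add]
    have h1 : (1 : Fin (k+1)).val = 1 % (k+1) := rfl
    have := x.isLt
    rw [h1]
    rcases Nat.eq_zero_or_pos k with rfl | hk
    · omega
    · rw [Nat.mod_eq_of_lt (by omega : 1 < k+1)]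


/-- Number of cycles (including fixed points) of a permutation of `Fin m`. -/
def numCycles {m : ℕ} (π : Equiv.Perm (Fin m)) : ℕ :=
  Multiset.card π.cycleType + (m - π.support.card)

/-- The arcs through `i` and through `j` (of the chord diagram given by the
fixed-point-free involution `α`) cross. -/
def Crosses {m : ℕ} (α : Equiv.Perm (Fin m)) (i j : Fin m) : Prop :=
  (min i.val (α i).val < min j.val (α j).val ∧
      min j.val (α j).val < max i.val (α i).val ∧
      max i.val (α i).val < max j.val (α j).val) ∨
  (min j.val (α j).val < min i.val (α i).val ∧
      min i.val (α i).val < max j.val (α j).val ∧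
      max j.val (α j).val < max i.val (α i).val)

/-- `α` is a shadow over one backbone with `n` arcs: a fixed-point-free
involution (perfect matching, so no isolated vertices), every arc crosses some
other arc (no noncrossing arcs), and there is no stack of length `> 1`
(no two parallel arcs `(i,j)`, `(i+1,j-1)`). -/
def IsShadow (n : ℕ) (α : Equiv.Perm (Fin (2 * n))) : Prop :=
  (∀ i, α (α i) = i) ∧ (∀ i, α i ≠ i) ∧
  (∀ i, ∃ j, j ≠ i ∧ j ≠ α i ∧ Crosses α i j) ∧
  (∀ i j : Fin (2 * n), α i = j → i.val + 1 < j.val →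
    ∀ i' j' : Fin (2 * n), i'.val = i.val + 1 → j'.val + 1 = j.val → α i' ≠ j')

/-- Any shadow of genus `g ≥ 1` over one backbone has at least `2g` and at most
`6g - 2` arcs.  The genus is defined by `2g = 1 + n - r`, where `r` is the
number of boundary components, i.e. the number of cycles of the permutation
obtained by composing the backbone rotation with the matching involution. -/
theorem shadow_arcs_bounds (n g : ℕ) (hn : 1 ≤ n) (hg : 1 ≤ g)
    (α : Equiv.Perm (Fin (2 * n))) (hs : IsShadow n α)
    (hgenus : 2 * g + numCycles (finRotate (2 * n) * α) = 1 + n) :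
    2 * g ≤ n ∧ n ≤ 6 * g - 2 := by
  obtain ⟨hinv, hfp, hcross, hstack⟩ := hs
  have h2n : 0 < 2 * n := by omega
  set σ : Equiv.Perm (Fin (2 * n)) := finRotate (2 * n) * α with hσdef
  have hσval : ∀ i : Fin (2 * n),
      ((σ i).val = (α i).val + 1 ∧ (α i).val + 1 < 2 * n) ∨
      ((σ i).val = 0 ∧ (α i).val + 1 = 2 * n) := by
    intro i
    have h1 : (σ i).val = ((α i).val + 1) % (2 * n) := val_finRotate h2n (α i)
    have h2 := (α i).isLt
    rcases Nat.lt_or_ge ((α i).val + 1) (2 * n) with h | h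
    · left; rw [Nat.mod_eq_of_lt h] at h1; exact ⟨h1, h⟩
    · right
      have : (α i).val + 1 = 2 * n := by omega
      rw [this, Nat.mod_self] at h1
      exact ⟨h1, this⟩
  -- Step 1: σ has no fixed points
  have hnofix : ∀ i, σ i ≠ i := by
    intro i hi
    obtain ⟨j, _, _, hcr⟩ := hcross i
    have hji := j.isLt
    have hαji := (α j).isLt
    have hαi : α i ≠ i := hfp i
    have hαiv : (α i).val ≠ i.val := fun h => hαi (Fin.ext h)
    rcases hσval i with ⟨h1, h2⟩ | ⟨h1, h2⟩ <;> rw [hi] at h1 <;>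
      rcases hcr with ⟨a, b, c⟩ | ⟨a, b, c⟩ <;> omega
  -- Step 2: fixed points of σ² are among {0, σ⁻¹ 0}
  have hkey : ∀ i j : Fin (2 * n), σ i = j → σ j = i →
      i.val < j.val → i.val ≠ 0 → j.val ≠ 0 → False := by
    intro i j hij hji hlt hi0 hj0
    have hαi : (α i).val + 1 = j.val := by
      rcases hσval i with ⟨h1, _⟩ | ⟨h1, _⟩
      · rw [hij] at h1; omega
      · rw [hij] at h1; omega
    have hαj : (α j).val + 1 = i.val := by
      rcases hσval j with ⟨h1, _⟩ | ⟨h1, _⟩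
      · rw [hji] at h1; omega
      · rw [hji] at h1; omega
    have hαaj : α (α j) = j := hinv j
    exact hstack (α j) j hαaj (by omega) i (α i) (by omega) hαi rfl
  have hkey2 : ∀ i : Fin (2 * n), σ (σ i) = i → i.val = 0 ∨ (σ i).val = 0 := by
    intro i h2
    by_contra hc
    push_neg at hc
    obtain ⟨hi0, hj0⟩ := hc
    have hne : σ i ≠ i := hnofix i
    have hnev : (σ i).val ≠ i.val := fun h => hne (Fin.ext h)
    rcases Nat.lt_or_ge i.val (σ i).val with h | h
    · exact hkey i (σ i) rfl h2 h hi0 hj0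
    · exact hkey (σ i) i h2 rfl (by omega) hj0 hi0
  -- support and cycle counting
  have hsupp : σ.support = Finset.univ :=
    Finset.eq_univ_iff_forall.2 fun i => Equiv.Perm.mem_support.2 (hnofix i)
  have hcard : σ.support.card = 2 * n := by
    rw [hsupp, Finset.card_univ, Fintype.card_fin]
  have hsum : σ.cycleType.sum = 2 * n := by
    rw [Equiv.Perm.sum_cycleType, hcard]
  have hnum : numCycles σ = Multiset.card σ.cycleType := by
    unfold numCycles; rw [hcard]; omega
  have hctcard : Multiset.card σ.cycleType = σ.cycleFactorsFinset.card := by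
    rw [Equiv.Perm.cycleType_def, Multiset.card_map]; rfl
  have hctsum : σ.cycleType.sum = ∑ c ∈ σ.cycleFactorsFinset, c.support.card := by
    rw [Equiv.Perm.cycleType_def]; rfl
  -- at most one transposition among the cycle factors
  have hzero : ∀ c ∈ σ.cycleFactorsFinset, c.support.card = 2 →
      (⟨0, h2n⟩ : Fin (2 * n)) ∈ c.support := by
    intro c hc h2
    obtain ⟨hcyc, hmem⟩ := Equiv.Perm.mem_cycleFactorsFinset_iff.1 hc
    obtain ⟨a, b, hab, rfl⟩ := Equiv.Perm.card_support_eq_two.1 h2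
    have hsab : (Equiv.swap a b).support = {a, b} := Equiv.Perm.support_swap hab
    have ha : a ∈ (Equiv.swap a b).support := by rw [hsab]; simp
    have hb : b ∈ (Equiv.swap a b).support := by rw [hsab]; simp
    have hσa : σ a = b := by rw [← hmem a ha, Equiv.swap_apply_left]
    have hσb : σ b = a := by rw [← hmem b hb, Equiv.swap_apply_right]
    have h2fix : σ (σ a) = a := by rw [hσa, hσb]
    rcases hkey2 a h2fix with h | h
    · rw [hsab]
      have : a = (⟨0, h2n⟩ : Fin (2 * n)) := Fin.ext h
      rw [this]; simp
    · rw [hσa] at h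
      rw [hsab]
      have : b = (⟨0, h2n⟩ : Fin (2 * n)) := Fin.ext h
      rw [this]; simp
  have honeT : ∀ c ∈ σ.cycleFactorsFinset, ∀ c' ∈ σ.cycleFactorsFinset,
      c.support.card = 2 → c'.support.card = 2 → c = c' := by
    intro c hc c' hc' h2 h2'
    by_contra hne
    have hdisj := (Equiv.Perm.cycleFactorsFinset_pairwise_disjoint σ) hc hc' hne
    have := Finset.disjoint_left.1 hdisj.disjoint_support (hzero c hc h2) (hzero c' hc' h2')
    exact this
  -- sum bound
  set F := σ.cycleFactorsFinset with hF
  set T := F.filter (fun c => c.support.card = 2) with hT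
  have hTcard : T.card ≤ 1 := by
    apply Finset.card_le_one.2
    intro a ha b hb
    rw [hT, Finset.mem_filter] at ha hb
    exact honeT a ha.1 b hb.1 ha.2 hb.2
  have hTsum : T.card = ∑ c ∈ F, (if c.support.card = 2 then 1 else 0) := by
    rw [hT, Finset.card_filter]
  have hbound : 3 * F.card ≤ (∑ c ∈ F, c.support.card) + T.card := by
    rw [hTsum, ← Finset.sum_add_distrib]
    calc 3 * F.card = ∑ _c ∈ F, 3 := by rw [Finset.sum_const, smul_eq_mul, mul_comm]
    _ ≤ ∑ c ∈ F, (c.support.card + if c.support.card = 2 then 1 else 0) := by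
        apply Finset.sum_le_sum
        intro c hc
        have hcyc := (Equiv.Perm.mem_cycleFactorsFinset_iff.1 hc).1
        have h2 := hcyc.two_le_card_support
        by_cases h : c.support.card = 2 <;> simp [h] <;> omega
  have hsum2 : (∑ c ∈ F, c.support.card) = 2 * n := by rw [← hctsum]; exact hsum
  have hrge1 : 1 ≤ F.card := by
    by_contra h
    have hFe : F = ∅ := Finset.card_eq_zero.1 (by omega)
    rw [hFe, Finset.sum_empty] at hsum2
    omega
  rw [hnum, hctcard] at hgenus
  omega
end

section
/- For fixed genus g ≥ 1, there exist only finitely many shadows of genus g over one backbone. -/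
lemma finRotate_val {m : ℕ} (k : Fin (m+1)) :
    ((finRotate (m+1)) k).val = if k.val = m then 0 else k.val + 1 := by
  rw [finRotate_succ_apply, Fin.val_add_one]
  congr 1
  simp [Fin.ext_iff, Fin.last]

section Key
variable {m : ℕ} (α : Equiv.Perm (Fin (m+1)))
  (h1 : ∀ i, α (α i) = i) (h2 : ∀ i, α i ≠ i)
  (h3 : ∀ i, ∃ j, j ≠ i ∧ j ≠ α i ∧ Crosses α i j)
  (h4 : ∀ i j : Fin (m+1), α i = j → i.val + 1 < j.val →
    ∀ i' j' : Fin (m+1), i'.val = i.val + 1 → j'.val + 1 = j.val → α i' ≠ j')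

-- no fixed points of γ = finRotate * α
include h2 h3 in
lemma no_fixed : ∀ i, (finRotate (m+1) * α) i ≠ i := by
  intro i hfix
  simp only [Equiv.Perm.mul_apply] at hfix
  have hv : ((finRotate (m+1)) (α i)).val = i.val := congrArg Fin.val hfix
  rw [finRotate_val] at hv
  obtain ⟨j, hj1, hj2, hcross⟩ := h3 i
  have hne1 : j.val ≠ i.val := fun h => hj1 (Fin.ext h)
  have hne2 : j.val ≠ (α i).val := fun h => hj2 (Fin.ext h)
  have hne3 : (α j).val ≠ j.val := fun h => h2 j (Fin.ext h)
  have hi : i.val < m + 1 := i.isLt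
  have hai : (α i).val < m + 1 := (α i).isLt
  have hjlt : j.val < m + 1 := j.isLt
  have hajlt : (α j).val < m + 1 := (α j).isLt
  rcases hcross with ⟨a, b, c⟩ | ⟨a, b, c⟩ <;> split at hv <;> omega

-- any 2-cycle of γ contains 0
include h1 h4 in
lemma two_cycle_aux : ∀ i j : Fin (m+1), (finRotate (m+1) * α) i = j →
    (finRotate (m+1) * α) j = i → i.val < j.val → i.val ≠ 0 → False := by
  intro i j hij hji hlt hi0
  simp only [Equiv.Perm.mul_apply] at hij hji
  have hv1 : ((finRotate (m+1)) (α i)).val = j.val := congrArg Fin.val hij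
  have hv2 : ((finRotate (m+1)) (α j)).val = i.val := congrArg Fin.val hji
  rw [finRotate_val] at hv1 hv2
  have hj0 : j.val ≠ 0 := by omega
  have hai : (α i).val + 1 = j.val := by split at hv1 <;> omega
  have haj : (α j).val + 1 = i.val := by split at hv2 <;> omega
  -- α (α j) = j, (α j).val + 1 = i.val < j.val
  exact h4 (α j) j (h1 j) (by omega) i (α i) (by omega) hai rfl

include h1 h2 h3 h4 in
lemma key_bound : 3 * numCycles (finRotate (m+1) * α) ≤ (m + 1) + 1 := by
  set γ := finRotate (m+1) * α with hγ
  have hnf := no_fixed α h2 h3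
  have hsupp : γ.support = Finset.univ := by
    apply Finset.eq_univ_iff_forall.mpr
    intro i; exact Equiv.Perm.mem_support.mpr (hnf i)
  have hcard : γ.support.card = m + 1 := by rw [hsupp]; simp
  have hnum : numCycles γ = Multiset.card γ.cycleType := by
    simp [numCycles, hcard]
  set F := γ.cycleFactorsFinset with hF
  have hctF : Multiset.card γ.cycleType = F.card := by
    rw [Equiv.Perm.cycleType_def]; simp [hF]
  have hsum : ∑ c ∈ F, c.support.card = m + 1 := by
    have h := Equiv.Perm.sum_cycleType γ
    rw [Equiv.Perm.cycleType_def, hcard] at h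
    exact h
  -- each cycle not containing 0 has support ≥ 3
  have hbig : ∀ c ∈ F, (0 : Fin (m+1)) ∉ c.support → 3 ≤ c.support.card := by
    intro c hc h0
    have hcyc := (Equiv.Perm.mem_cycleFactorsFinset_iff.mp hc).1
    have hagree := (Equiv.Perm.mem_cycleFactorsFinset_iff.mp hc).2
    have h2le := hcyc.two_le_card_support
    rcases Nat.lt_or_ge c.support.card 3 with hlt | hge
    · exfalso
      have hcard2 : c.support.card = 2 := by omega
      obtain ⟨a, b, hab, hswap⟩ := Equiv.Perm.card_support_eq_two.mp hcard2
      have hsa : a ∈ c.support := by rw [hswap]; simp [Equiv.Perm.support_swap hab]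
      have hsb : b ∈ c.support := by rw [hswap]; simp [Equiv.Perm.support_swap hab]
      have hga : γ a = b := by rw [← hagree a hsa, hswap]; simp
      have hgb : γ b = a := by rw [← hagree b hsb, hswap]; simp [Equiv.swap_apply_right]
      -- a 2-cycle of γ: must contain 0
      have habv : a.val ≠ b.val := fun h => hab (Fin.ext h)
      have h0a : a.val ≠ 0 ∨ b.val ≠ 0 → a.val < b.val ∨ b.val < a.val := by omega
      rcases Nat.lt_or_ge a.val b.val with hlt' | hge'
      · rcases Nat.eq_zero_or_pos a.val with hz | hp
        · exact h0 (by rwa [show (0 : Fin (m+1)) = a from (Fin.ext hz.symm)])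
        · exact two_cycle_aux α h1 h4 a b hga hgb hlt' (by omega)
      · have hlt' : b.val < a.val := by omega
        rcases Nat.eq_zero_or_pos b.val with hz | hp
        · exact h0 (by rwa [show (0 : Fin (m+1)) = b from (Fin.ext hz.symm)])
        · exact two_cycle_aux α h1 h4 b a hgb hga hlt' (by omega)
    · exact hge
  -- at most one cycle contains 0
  have h0count : (F.filter (fun c => (0 : Fin (m+1)) ∈ c.support)).card ≤ 1 := by
    apply Finset.card_le_one.mpr
    intro c hc d hd
    simp only [Finset.mem_filter] at hc hd
    rw [Equiv.Perm.cycle_is_cycleOf hc.2 hc.1, Equiv.Perm.cycle_is_cycleOf hd.2 hd.1]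
  have hmain : 3 * F.card ≤ (m + 1) + 1 := by
    have step : 3 * F.card ≤ ∑ c ∈ F, (c.support.card + if (0 : Fin (m+1)) ∈ c.support then 1 else 0) := by
      rw [show 3 * F.card = ∑ _c ∈ F, 3 by simp [mul_comm]]
      apply Finset.sum_le_sum
      intro c hc
      by_cases h0 : (0 : Fin (m+1)) ∈ c.support
      · have := (Equiv.Perm.mem_cycleFactorsFinset_iff.mp hc).1.two_le_card_support
        simp [h0]; omega
      · have := hbig c hc h0
        simp [h0]; omega
    rw [Finset.sum_add_distrib, hsum, Finset.sum_boole] at step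
    push_cast at step
    omega
  omega

end Key

lemma key_bound' (M : ℕ) (hM : 0 < M) (α : Equiv.Perm (Fin M))
    (h1 : ∀ i, α (α i) = i) (h2 : ∀ i, α i ≠ i)
    (h3 : ∀ i, ∃ j, j ≠ i ∧ j ≠ α i ∧ Crosses α i j)
    (h4 : ∀ i j : Fin M, α i = j → i.val + 1 < j.val →
      ∀ i' j' : Fin M, i'.val = i.val + 1 → j'.val + 1 = j.val → α i' ≠ j') :
    3 * numCycles (finRotate M * α) ≤ M + 1 := by
  obtain ⟨m, rfl⟩ : ∃ m, M = m + 1 := ⟨M - 1, by omega⟩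
  exact key_bound α h1 h2 h3 h4

/-- For fixed genus `g ≥ 1` there are only finitely many shadows of genus `g`
over one backbone. -/
theorem shadows_of_genus_finite (g : ℕ) (hg : 1 ≤ g) :
    {s : Σ n : ℕ, Equiv.Perm (Fin (2 * n)) |
      IsShadow s.1 s.2 ∧
        2 * g + numCycles (finRotate (2 * s.1) * s.2) = 1 + s.1}.Finite := by
  apply Set.Finite.subset (Set.finite_range
    (fun p : (Σ k : Fin (6 * g + 1), Equiv.Perm (Fin (2 * (k : ℕ)))) =>
      (⟨(p.1 : ℕ), p.2⟩ : Σ n : ℕ, Equiv.Perm (Fin (2 * n)))))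
  rintro ⟨n, α⟩ ⟨⟨ha1, ha2, ha3, ha4⟩, heq⟩
  have heq' : 2 * g + numCycles (finRotate (2 * n) * α) = 1 + n := heq
  clear heq
  have hn : n ≤ 6 * g := by
    rcases Nat.eq_zero_or_pos n with rfl | hp
    · exfalso
      have hone : (finRotate (2 * 0) * α) = 1 := by
        apply Equiv.ext; intro i; exact i.elim0
      rw [hone] at heq'
      simp only [numCycles, Equiv.Perm.cycleType_one, Equiv.Perm.support_one] at heq'
      simp at heq'
    · have := key_bound' (2 * n) (by omega) α ha1 ha2 ha3 ha4
      omega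
  exact ⟨⟨⟨n, by omega⟩, α⟩, rfl⟩
end

section
/- Let Is_γ(z,t) be a polynomial in z of degree 6γ−2 (with coefficients polynomials in t) and let P_γ(z,t,X) = (1 − zX²)^{6γ−2}(−1 + X − zX²) − (1 − zX²)^{6γ−2} · Is_γ(zX²/(1 − zX²), t). Then P_γ(z,t,X) is a polynomial in X of degree 12γ−2, and any formal power series H(z,t) satisfying H − zH² − Is_γ(zH²/(1 − zH²), t) = 1 satisfies P_γ(z,t,H) = 0. -/
open Polynomial Finset

/-!
Write `n = 6γ - 2`, `A = zX²` and `B = 1 - zX²`. The subtracted sum is the degree-`n`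
homogenisation `∑ aₖ Aᵏ Bⁿ⁻ᵏ` of `Is`, so it has degree at most `2n`, while the first
product has degree exactly `2n + 2 = 12γ - 2`. At a point `H` with `B(H) ≠ 0` the
homogenisation evaluates to `B(H)ⁿ · Is(A(H)/B(H))`, so
`P(H) = B(H)ⁿ · (H - zH² - Is(zH²/(1 - zH²)) - 1)`, which vanishes.
-/

theorem Polynomial.natDegree_sum_C_mul_pow_mul_pow_le {R : Type*} [CommSemiring R] (c : ℕ → R)
    {A B : R[X]} {d : ℕ} (hA : A.natDegree ≤ d) (hB : B.natDegree ≤ d) (n : ℕ) :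
    (∑ k ∈ range (n + 1), C (c k) * A ^ k * B ^ (n - k)).natDegree ≤ n * d := by
  refine natDegree_sum_le_of_forall_le _ _ fun k hk => ?_
  have hkn : k ≤ n := Nat.lt_succ_iff.mp (mem_range.mp hk)
  calc (C (c k) * A ^ k * B ^ (n - k)).natDegree
      ≤ (A ^ k).natDegree + (B ^ (n - k)).natDegree :=
        natDegree_mul_le.trans (add_le_add (natDegree_C_mul_le _ _) le_rfl)
    _ ≤ k * d + (n - k) * d :=
        add_le_add (natDegree_pow_le_of_le k hA) (natDegree_pow_le_of_le (n - k) hB)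
    _ = n * d := by rw [← add_mul, Nat.add_sub_cancel' hkn]

theorem Polynomial.sum_coeff_mul_pow_mul_pow_eq {K : Type*} [Field K] {p : K[X]} {n : ℕ}
    (hp : p.natDegree ≤ n) (a : K) {b : K} (hb : b ≠ 0) :
    ∑ k ∈ range (n + 1), p.coeff k * a ^ k * b ^ (n - k) = b ^ n * p.eval (a / b) := by
  rw [eval_eq_sum_range' (Nat.lt_succ_of_le hp), mul_sum]
  refine sum_congr rfl fun k hk => ?_
  rw [div_pow, pow_sub₀ _ hb (Nat.lt_succ_iff.mp (mem_range.mp hk))]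
  field_simp

theorem Polynomial.natDegree_one_sub_C_mul_X_sq {R : Type*} [Ring R] {z : R} (hz : z ≠ 0) :
    (1 - C z * X ^ 2 : R[X]).natDegree = 2 := by
  compute_degree!

theorem Polynomial.natDegree_neg_one_add_X_sub_C_mul_X_sq {R : Type*} [Ring R] {z : R}
    (hz : z ≠ 0) : (-1 + X - C z * X ^ 2 : R[X]).natDegree = 2 := by
  compute_degree!
  simpa [coeff_one] using hz

/-- Let `Is` be the polynomial `Is_γ(·,t)` (a polynomial of degree `6γ-2`;
its coefficients are polynomials in `t`, here absorbed into the field `F`),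
and let
`P_γ(z,t,X) = (1-zX²)^{6γ-2}(-1+X-zX²) - (1-zX²)^{6γ-2}·Is(zX²/(1-zX²))`,
written as a genuine polynomial in `X`.  Then `P_γ` has degree `12γ-2` in `X`,
and any power series `H` satisfying
`H - zH² - Is(zH²/(1-zH²)) = 1` satisfies `P_γ(z,t,H) = 0`. -/
theorem P_gamma_poly_and_annihilates {F : Type*} [Field F]
    (γ : ℕ) (hγ : 1 ≤ γ) (z : F) (hz : z ≠ 0)
    (Is : Polynomial F) (hdeg : Is.natDegree = 6 * γ - 2) :
    let P : Polynomial F :=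
      (1 - C z * X ^ 2) ^ (6 * γ - 2) * (-1 + X - C z * X ^ 2) -
        ∑ k ∈ Finset.range (6 * γ - 1),
          C (Is.coeff k) * (C z * X ^ 2) ^ k *
            (1 - C z * X ^ 2) ^ (6 * γ - 2 - k)
    P.natDegree = 12 * γ - 2 ∧
      ∀ H : F, 1 - z * H ^ 2 ≠ 0 →
        H - z * H ^ 2 - Is.eval (z * H ^ 2 / (1 - z * H ^ 2)) = 1 →
        P.eval H = 0 := by
  intro P
  obtain ⟨n, hn⟩ : ∃ n, n = 6 * γ - 2 := ⟨_, rfl⟩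
  have hrange : 6 * γ - 1 = n + 1 := by omega
  simp only [P, ← hn, hrange]
  rw [← hn] at hdeg
  refine ⟨?_, fun H hH hIs => ?_⟩
  · have hB : (1 - C z * X ^ 2 : F[X]).natDegree = 2 := natDegree_one_sub_C_mul_X_sq hz
    have hQ := natDegree_neg_one_add_X_sub_C_mul_X_sq hz
    have hlead : ((1 - C z * X ^ 2) ^ n * (-1 + X - C z * X ^ 2) : F[X]).natDegree = n * 2 + 2 := by
      rw [natDegree_mul (pow_ne_zero _ (ne_zero_of_natDegree_gt (hB ▸ two_pos)))
        (ne_zero_of_natDegree_gt (hQ ▸ two_pos)), natDegree_pow, hB, hQ]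
    have htail := natDegree_sum_C_mul_pow_mul_pow_le Is.coeff
      (A := C z * X ^ 2) (natDegree_C_mul_X_pow_le z 2) hB.le n
    rw [natDegree_sub_eq_left_of_natDegree_lt (by omega), hlead]
    omega
  · simp only [eval_sub, eval_mul, eval_pow, eval_add, eval_neg, eval_one, eval_C,
      eval_X, eval_finsetSum]
    rw [sum_coeff_mul_pow_mul_pow_eq hdeg.le _ hH]
    linear_combination (1 - z * H ^ 2) ^ n * hIs
end

section
/- For γ = 1, the generating function H₁(z,t) of 1-matchings filtered by genus satisfies P₁(z,t,H₁(z,t)) = 0 where P₁(z,t,X) = −1 + X + 3X²z − 4X³z − 2X⁴z² − X⁴tz² + 6X⁵z² − 2X⁶z³ − 4X⁷z³ + 3X⁸z⁴ + X⁹z⁴ − X¹⁰z⁵. -/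
/-! Write `u = zH²`. The defining relation `(1 - u) W = u` gives `(1 - u)(1 + W) = 1`, so
multiplying the functional equation by `(1 - u)⁴` turns `t W² (1 + W)²` into
`t ((1 - u) W)² ((1 - u)(1 + W))² = t u²`. What remains is a polynomial identity in `H`,
and `P₁` is its expansion. -/

section ClearDenominators

variable {R : Type*} [CommRing R]

theorem one_sub_pow_four_mul_sq_mul_one_add_sq {u w : R} (h : (1 - u) * w = u) :
    (1 - u) ^ 4 * (w ^ 2 * (1 + w) ^ 2) = u ^ 2 := by
  have h_inv : (1 - u) * (1 + w) = 1 := by linear_combination h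
  calc (1 - u) ^ 4 * (w ^ 2 * (1 + w) ^ 2) = ((1 - u) * w) ^ 2 * ((1 - u) * (1 + w)) ^ 2 := by
        ring
    _ = u ^ 2 := by rw [h, h_inv, one_pow, mul_one]

theorem functional_equation_mul_one_sub_pow_four {z t H W : R}
    (hW : (1 - z * H ^ 2) * W = z * H ^ 2)
    (hH : H - z * H ^ 2 - t * W ^ 2 * (1 + W) ^ 2 = 1) :
    (1 - z * H ^ 2) ^ 4 * (-1 + H - z * H ^ 2) - t * (z * H ^ 2) ^ 2 = 0 := by
  linear_combination (1 - z * H ^ 2) ^ 4 * hH + t * one_sub_pow_four_mul_sq_mul_one_add_sq hW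

end ClearDenominators

theorem P_one_annihilates_H_one_general (H : PowerSeries (Polynomial ℚ))
    (heq : ∃ W : PowerSeries (Polynomial ℚ),
      (1 - PowerSeries.X * H ^ 2) * W = PowerSeries.X * H ^ 2 ∧
      H - PowerSeries.X * H ^ 2 -
        PowerSeries.C (Polynomial.X : Polynomial ℚ) * W ^ 2 * (1 + W) ^ 2 = 1) :
    -1 + H + 3 * H ^ 2 * PowerSeries.X - 4 * H ^ 3 * PowerSeries.X -
      2 * H ^ 4 * PowerSeries.X ^ 2 -
      PowerSeries.C (Polynomial.X : Polynomial ℚ) * H ^ 4 * PowerSeries.X ^ 2 +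
      6 * H ^ 5 * PowerSeries.X ^ 2 - 2 * H ^ 6 * PowerSeries.X ^ 3 -
      4 * H ^ 7 * PowerSeries.X ^ 3 + 3 * H ^ 8 * PowerSeries.X ^ 4 +
      H ^ 9 * PowerSeries.X ^ 4 - H ^ 10 * PowerSeries.X ^ 5 = 0 := by
  obtain ⟨W, hW, hH⟩ := heq
  linear_combination functional_equation_mul_one_sub_pow_four hW hH

/-- For `γ = 1`, the genus-filtered generating function `H₁(z,t)` of
`1`-matchings (the power series solution with constant term `1` of
`H - zH² - Is₁(zH²/(1-zH²), t) = 1`, where `Is₁(w,t) = t·w²(1+w)²`)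
satisfies `P₁(z,t,H₁(z,t)) = 0` for the explicit degree-10 polynomial `P₁`.
Here `z = PowerSeries.X`, and `t` is the polynomial variable of the
coefficient ring `ℚ[t]`. -/
theorem P_one_annihilates_H_one (H : PowerSeries (Polynomial ℚ))
    (hconst : PowerSeries.constantCoeff H = 1)
    (heq : ∃ W : PowerSeries (Polynomial ℚ),
      (1 - PowerSeries.X * H ^ 2) * W = PowerSeries.X * H ^ 2 ∧
      H - PowerSeries.X * H ^ 2 -
        PowerSeries.C (Polynomial.X : Polynomial ℚ) * W ^ 2 * (1 + W) ^ 2 = 1) :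
    -1 + H + 3 * H ^ 2 * PowerSeries.X - 4 * H ^ 3 * PowerSeries.X -
      2 * H ^ 4 * PowerSeries.X ^ 2 -
      PowerSeries.C (Polynomial.X : Polynomial ℚ) * H ^ 4 * PowerSeries.X ^ 2 +
      6 * H ^ 5 * PowerSeries.X ^ 2 - 2 * H ^ 6 * PowerSeries.X ^ 3 -
      4 * H ^ 7 * PowerSeries.X ^ 3 + 3 * H ^ 8 * PowerSeries.X ^ 4 +
      H ^ 9 * PowerSeries.X ^ 4 - H ^ 10 * PowerSeries.X ^ 5 = 0 :=
  P_one_annihilates_H_one_general H heq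
end

section
/- Let Φ(z,y) be a bivariate polynomial and y(z) a power series analytic at 0 with Φ(z, y(z)) = 0 identically. If ρ is a singularity of y(z) with finite limit π = lim_{z→ρ⁻} y(z) and ∂Φ/∂y does not vanish identically along y, then (ρ, π) satisfies Φ(ρ,π) = 0 and Φ_y(ρ,π) = 0; in particular ρ is a root of the resultant Δ(z) = Res_y(Φ(z,y), Φ_y(z,y)). -/
/-!
By continuity along the real radius, `Φ(ρ, π) = 0`. If `Φ_y(ρ, π) ≠ 0`, the analytic implicit
function theorem yields `g` analytic at `ρ` whose graph contains every zero of `Φ` near `(ρ, π)`.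
Since `(x, y(x)) → (ρ, π)` as `x → ρ⁻`, `y` agrees with `g` on a real segment ending at `ρ`, so by
the identity theorem `g` continues `y` analytically to `ρ`, contradicting the singularity.
-/

open Polynomial Filter Set Metric
open scoped Topology ContDiff

theorem analyticOnNhd_eval_map_evalRingHom {𝕜 : Type*} [NontriviallyNormedField 𝕜]
    (Φ : 𝕜[X][X]) :
    AnalyticOnNhd 𝕜 (fun p : 𝕜 × 𝕜 => (Φ.map (evalRingHom p.1)).eval p.2) univ := by
  simp_rw [eval_map, eval₂_eq_sum_range]
  exact Finset.analyticOnNhd_fun_sum _ fun i _ =>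
    (analyticOnNhd_fst.aeval_polynomial (Φ.coeff i)).mul (analyticOnNhd_snd.pow i)

theorem isInvertible_fderiv_comp_inr_of_hasDerivAt {𝕜 : Type*} [NontriviallyNormedField 𝕜]
    {f : 𝕜 × 𝕜 → 𝕜} {u : 𝕜 × 𝕜} {c : 𝕜} (hf : DifferentiableAt 𝕜 f u)
    (hc : HasDerivAt (fun w => f (u.1, w)) c u.2) (hc₀ : c ≠ 0) :
    (fderiv 𝕜 f u ∘L .inr 𝕜 𝕜 𝕜).IsInvertible := by
  refine ⟨ContinuousLinearEquiv.unitsEquivAut 𝕜 (Units.mk0 c hc₀), ?_⟩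
  have hpartial : HasDerivAt (fun w => f (u.1, w)) (fderiv 𝕜 f u (0, 1)) u.2 :=
    hf.hasFDerivAt.comp_hasDerivAt u.2 ((hasDerivAt_const _ _).prodMk (hasDerivAt_id _))
  ext
  simp [hc.unique hpartial]

theorem AnalyticAt.exists_analyticAt_implicitFunction {𝕜 : Type*} [RCLike 𝕜]
    {E₁ E₂ F : Type*} [NormedAddCommGroup E₁] [NormedSpace 𝕜 E₁] [CompleteSpace E₁]
    [NormedAddCommGroup E₂] [NormedSpace 𝕜 E₂] [CompleteSpace E₂]
    [NormedAddCommGroup F] [NormedSpace 𝕜 F] [CompleteSpace F]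
    {f : E₁ × E₂ → F} {u : E₁ × E₂} (hf : AnalyticAt 𝕜 f u)
    (hinv : (fderiv 𝕜 f u ∘L .inr 𝕜 E₁ E₂).IsInvertible) :
    ∃ g : E₁ → E₂, AnalyticAt 𝕜 g u.1 ∧ ∀ᶠ v in 𝓝 u, f v = f u → g v.1 = v.2 := by
  have hω : ContDiffAt 𝕜 ω f u := hf.contDiffAt
  exact ⟨hω.implicitFunction (by simp) hinv,
    (hω.contDiffAt_implicitFunction _ hinv).analyticAt,
    (hω.eventually_apply_eq_iff_implicitFunction _ hinv).mono fun _ h => h.1⟩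

theorem AnalyticOnNhd.eqOn_of_preconnected_of_eventuallyEq_ofReal {E : Type*}
    [NormedAddCommGroup E] [NormedSpace ℂ E] [CompleteSpace E] {f g : ℂ → E} {U : Set ℂ}
    (hf : AnalyticOnNhd ℂ f U) (hg : AnalyticOnNhd ℂ g U) (hU : IsPreconnected U) {x₀ : ℝ}
    (hx₀ : (x₀ : ℂ) ∈ U) (hfg : ∀ᶠ x : ℝ in 𝓝 x₀, f x = g x) : EqOn f g U := by
  have hofReal : Tendsto ((↑) : ℝ → ℂ) (𝓝[≠] x₀) (𝓝[≠] (x₀ : ℂ)) :=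
    Complex.continuous_ofReal.continuousWithinAt.tendsto_nhdsWithin fun _ _ ↦ by simp_all
  exact hf.eqOn_of_preconnected_of_frequently_eq hg hU hx₀
    (hofReal.frequently (hfg.filter_mono nhdsWithin_le_nhds).frequently)

theorem eventually_nhdsLT_ofReal_mem_ball {ρ : ℝ} (hρ : 0 < ρ) :
    ∀ᶠ x : ℝ in 𝓝[<] ρ, (x : ℂ) ∈ ball (0 : ℂ) ρ := by
  filter_upwards [Ioo_mem_nhdsLT hρ] with x hx
  simpa [abs_of_pos hx.1] using hx.2

theorem eventually_eq_of_eventually_eq_ofReal_nhdsLT {E : Type*}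
    [NormedAddCommGroup E] [NormedSpace ℂ E] [CompleteSpace E] {y g : ℂ → E} {ρ : ℝ} (hρ : 0 < ρ)
    (hy : AnalyticOnNhd ℂ y (ball 0 ρ)) (hg : AnalyticAt ℂ g ρ)
    (hyg : ∀ᶠ x : ℝ in 𝓝[<] ρ, y x = g x) :
    ∀ᶠ z in 𝓝[ball 0 ρ] (ρ : ℂ), g z = y z := by
  obtain ⟨r, hr, hgr⟩ := eventually_nhds_iff_ball.mp hg.eventually_analyticAt
  set U := ball (0 : ℂ) ρ ∩ ball (ρ : ℂ) r
  have hU : ∀ᶠ x : ℝ in 𝓝[<] ρ, (x : ℂ) ∈ U :=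
    (eventually_nhdsLT_ofReal_mem_ball hρ).and <| eventually_nhdsWithin_of_eventually_nhds <|
      Complex.continuous_ofReal.continuousAt.eventually_mem (ball_mem_nhds _ hr)
  have hyg_nhds : ∀ᶠ x : ℝ in 𝓝[<] ρ, ∀ᶠ x' : ℝ in 𝓝 x, y x' = g x' :=
    (eventually_eventually_nhdsWithin.mpr hyg).mp <| eventually_mem_nhdsWithin.mono
      fun x hx h => by rwa [isOpen_Iio.nhdsWithin_eq hx] at h
  obtain ⟨x₀, hx₀U, hx₀⟩ := (hU.and hyg_nhds).exists
  have hyU : AnalyticOnNhd ℂ y U := fun z hz => hy z hz.1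
  have hUeq : EqOn y g U := hyU.eqOn_of_preconnected_of_eventuallyEq_ofReal
    (fun z hz => hgr z hz.2) ((convex_ball _ _).inter (convex_ball _ _)).isPreconnected hx₀U hx₀
  filter_upwards [self_mem_nhdsWithin, mem_nhdsWithin_of_mem_nhds (ball_mem_nhds _ hr)]
    with z hz hzr using (hUeq ⟨hz, hzr⟩).symm

theorem singularity_satisfies_system_general
    (Φ : Polynomial (Polynomial ℂ)) (y : ℂ → ℂ) (ρ : ℝ) (π : ℂ)
    (hρ : 0 < ρ)
    (hy : AnalyticOnNhd ℂ y (Metric.ball (0 : ℂ) ρ))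
    (heq : ∀ z ∈ Metric.ball (0 : ℂ) ρ,
      (Φ.map (evalRingHom z)).eval (y z) = 0)
    (hsing : ¬ ∃ g : ℂ → ℂ, AnalyticAt ℂ g (ρ : ℂ) ∧
      ∀ᶠ z in nhdsWithin (ρ : ℂ) (Metric.ball (0 : ℂ) ρ), g z = y z)
    (hlim : Filter.Tendsto (fun x : ℝ => y x)
      (nhdsWithin ρ (Set.Iio ρ)) (nhds π)) :
    (Φ.map (evalRingHom (ρ : ℂ))).eval π = 0 ∧
    ((derivative Φ).map (evalRingHom (ρ : ℂ))).eval π = 0 ∧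
    ∃ w : ℂ, (Φ.map (evalRingHom (ρ : ℂ))).eval w = 0 ∧
      ((derivative Φ).map (evalRingHom (ρ : ℂ))).eval w = 0 := by
  set P : ℂ × ℂ → ℂ := fun p => (Φ.map (evalRingHom p.1)).eval p.2
  have hP : AnalyticAt ℂ P (ρ, π) := analyticOnNhd_eval_map_evalRingHom Φ _ trivial
  have hcurve : Tendsto (fun x : ℝ => ((x : ℂ), y x)) (𝓝[<] ρ) (𝓝 ((ρ : ℂ), π)) :=
    ((Complex.continuous_ofReal.tendsto ρ).mono_left nhdsWithin_le_nhds).prodMk_nhds hlim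
  have hzero : ∀ᶠ x : ℝ in 𝓝[<] ρ, P (x, y x) = 0 :=
    (eventually_nhdsLT_ofReal_mem_ball hρ).mono fun x hx => heq x hx
  have hΦ : P (ρ, π) = 0 :=
    tendsto_nhds_unique (hP.continuousAt.tendsto.comp hcurve) (tendsto_const_nhds.congr' (hzero.mono fun _ h => h.symm))
  have hΦy : ((derivative Φ).map (evalRingHom (ρ : ℂ))).eval π = 0 := by
    by_contra hne
    have hpartial : HasDerivAt (fun w => P (ρ, w))
        (((derivative Φ).map (evalRingHom (ρ : ℂ))).eval π) π := by
      simpa only [derivative_map] using (Φ.map (evalRingHom (ρ : ℂ))).hasDerivAt π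
    obtain ⟨g, hg, hgP⟩ := hP.exists_analyticAt_implicitFunction
      (isInvertible_fderiv_comp_inr_of_hasDerivAt hP.differentiableAt hpartial hne)
    have hyg : ∀ᶠ x : ℝ in 𝓝[<] ρ, y x = g x := by
      filter_upwards [hcurve.eventually hgP, hzero] with x hx hx₀
      exact (hx (hx₀.trans hΦ.symm)).symm
    exact hsing ⟨g, hg, eventually_eq_of_eventually_eq_ofReal_nhdsLT hρ hy hg hyg⟩
  exact ⟨hΦ, hΦy, π, hΦ, hΦy⟩

/-- Localization of singularities of algebraic functions.  Let
`Φ ∈ ℂ[z][y]` and let `y(z)` be analytic on the disc `|z| < ρ` with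
`Φ(z, y(z)) = 0` there.  Suppose `ρ` is a singularity of `y` (no analytic
continuation to `ρ`), that `y(z) → π` as `z → ρ⁻` along the reals, and that
`Φ_y(z, y(z))` does not vanish identically.  Then `Φ(ρ, π) = 0` and
`Φ_y(ρ, π) = 0`; in particular `Φ(ρ,·)` and `Φ_y(ρ,·)` have a common root,
so the resultant `Δ(z) = Res_y(Φ, Φ_y)` vanishes at `z = ρ`. -/
theorem singularity_satisfies_system
    (Φ : Polynomial (Polynomial ℂ)) (y : ℂ → ℂ) (ρ : ℝ) (π : ℂ)
    (hρ : 0 < ρ)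
    (hy : AnalyticOnNhd ℂ y (Metric.ball (0 : ℂ) ρ))
    (heq : ∀ z ∈ Metric.ball (0 : ℂ) ρ,
      (Φ.map (evalRingHom z)).eval (y z) = 0)
    (hsing : ¬ ∃ g : ℂ → ℂ, AnalyticAt ℂ g (ρ : ℂ) ∧
      ∀ᶠ z in nhdsWithin (ρ : ℂ) (Metric.ball (0 : ℂ) ρ), g z = y z)
    (hlim : Filter.Tendsto (fun x : ℝ => y x)
      (nhdsWithin ρ (Set.Iio ρ)) (nhds π))
    (hnv : ¬ ∀ z ∈ Metric.ball (0 : ℂ) ρ,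
      ((derivative Φ).map (evalRingHom z)).eval (y z) = 0) :
    (Φ.map (evalRingHom (ρ : ℂ))).eval π = 0 ∧
    ((derivative Φ).map (evalRingHom (ρ : ℂ))).eval π = 0 ∧
    ∃ w : ℂ, (Φ.map (evalRingHom (ρ : ℂ))).eval w = 0 ∧
      ((derivative Φ).map (evalRingHom (ρ : ℂ))).eval w = 0 :=
  singularity_satisfies_system_general Φ y ρ π hρ hy heq hsing hlim
end
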